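/- arXiv:1812.06127 — 4 statements merged into one kernel-verified Lean document; each statement's English description precedes it below -/
import Mathlib

section
/- Non-convex FedProx convergence (B-local dissimilarity). Assume each F k is differentiable with L-Lipschitz gradient and satisfies the curvature lower bound with constant L₋, where 0 ≤ L₋ < μ and μ̄ := μ − L₋ > 0. Let wᵗ ∈ E, let the local functions be B-dissimilar at wᵗ (with B ≥ 0), and for each device k let w k⁺ be a γ-inexact solution of min h k (0 ≤ γ ≤ 1). Let K ≥ 1 and set ρ := 1/μ − γB/μ − √2·B(1+γ)/(μ̄·√K) − L·B(1+γ)/(μ̄·μ) − L·(1+γ)²·B²/(2μ̄²) − L·B²·(1+γ)²·(2√(2K)+2)/(μ̄²·K). Then the expected objective after one FedProx round satisfies ∑_{s : Fin K → Fin N} (∏ j, p (s j)) · f((1/K)·∑ j, w (s j)⁺) ≤ f(wᵗ) − ρ·‖∇f(wᵗ)‖². -/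
/-!
Put `a k = ∇F k (wᵗ)`, `u k = w k⁺ - wᵗ`, `ū = ∑ p k • u k` and `c = (1 + γ) / μ̄`.
Weak convexity makes `∇F k + μ • (· - wᵗ)` `μ̄`-strongly monotone, so an inexact proximal step
obeys `‖u k‖ ≤ c ‖a k‖`. Since `μ • u k` is the proximal residual minus `a k` minus the drift
`∇F k (w k⁺) - a k`, and `∑ p k ‖a k‖ ≤ B ‖∇f wᵗ‖` by Jensen and B-dissimilarity,
`μ ⟪∇f wᵗ, ū⟫ ≤ -(1 - (γ + L c) B) ‖∇f wᵗ‖²`.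

The sample mean is unbiased for `wᵗ + ū`, with variance `1 / K` times the `p`-variance of the
`w k⁺`. Hence the descent lemma, applied at `wᵗ + ū` and at `wᵗ`, bounds the expected objective by
`f wᵗ + ⟪∇f wᵗ, ū⟫ + (L / 2) ∑ p k ‖u k‖²`, and `∑ p k ‖u k‖² ≤ (c B)² ‖∇f wᵗ‖²`. The resulting
rate `(1 - (γ + L c) B) / μ - (L / 2) (c B)²` is at least `ρ`.
-/

open Finset Set AffineMap
open scoped RealInnerProductSpace NNReal Gradient

section Sampling

variable {ι M E : Type*} [Fintype ι] {p : ι → ℝ}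

theorem sum_fin_succ_pi [AddCommMonoid M] {K : ℕ} (Φ : (Fin (K + 1) → ι) → M) :
    ∑ s, Φ s = ∑ a, ∑ s : Fin K → ι, Φ (Fin.cons a s) := by
  rw [← (Fin.consEquiv fun _ => ι).sum_comp, Fintype.sum_prod_type]
  rfl

theorem sum_prod_apply_eq_one (hp1 : ∑ k, p k = 1) (K : ℕ) :
    ∑ s : Fin K → ι, ∏ j, p (s j) = 1 := by
  rw [← Fintype.sum_pow, hp1, one_pow]

theorem sum_prod_smul_sum_eq_zero [AddCommGroup M] [Module ℝ M] (hp1 : ∑ k, p k = 1)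
    {v : ι → M} (hv : ∑ k, p k • v k = 0) (K : ℕ) :
    ∑ s : Fin K → ι, (∏ j, p (s j)) • ∑ j, v (s j) = 0 := by
  induction K with
  | zero => simp
  | succ K ih =>
    simp only [sum_fin_succ_pi, Fin.prod_univ_succ, Fin.sum_univ_succ, Fin.cons_zero,
      Fin.cons_succ, mul_smul, smul_add, sum_add_distrib, ← smul_sum, ← sum_smul, ih,
      sum_prod_apply_eq_one hp1, one_smul, smul_zero, hv, sum_const_zero, add_zero]

theorem sum_smul_sub_eq [AddCommGroup M] [Module ℝ M] (hp1 : ∑ k, p k = 1) (w : ι → M) (x : M) :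
    ∑ k, p k • (w k - x) = ∑ k, p k • w k - x := by
  simp only [smul_sub, sum_sub_distrib, ← sum_smul, hp1, one_smul]

variable [NormedAddCommGroup E] [InnerProductSpace ℝ E]

theorem sum_prod_mul_norm_sum_sq_eq (hp1 : ∑ k, p k = 1) {v : ι → E} (hv : ∑ k, p k • v k = 0)
    (K : ℕ) :
    ∑ s : Fin K → ι, (∏ j, p (s j)) * ‖∑ j, v (s j)‖ ^ 2 = K * ∑ k, p k * ‖v k‖ ^ 2 := by
  induction K with
  | zero => simp
  | succ K ih =>
    have hcross (a : ι) : ∑ s : Fin K → ι, (∏ j, p (s j)) * ⟪v a, ∑ j, v (s j)⟫ = 0 := by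
      simp_rw [← real_inner_smul_right, ← inner_sum, sum_prod_smul_sum_eq_zero hp1 hv,
        inner_zero_right]
    simp only [sum_fin_succ_pi, Fin.prod_univ_succ, Fin.sum_univ_succ, Fin.cons_zero,
      Fin.cons_succ, norm_add_sq_real, mul_assoc, mul_add, sum_add_distrib, ← mul_sum,
      ← sum_mul, sum_prod_apply_eq_one hp1, ih]
    simp only [mul_left_comm _ (2 : ℝ), ← mul_sum, hcross, mul_zero, sum_const_zero, hp1,
      one_mul, add_zero]
    push_cast
    ring

theorem sum_mul_norm_sub_sq_eq (hp1 : ∑ k, p k = 1) (w : ι → E) (x : E) :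
    ∑ k, p k * ‖w k - x‖ ^ 2
      = ∑ k, p k * ‖w k - ∑ i, p i • w i‖ ^ 2 + ‖∑ i, p i • w i - x‖ ^ 2 := by
  set c := ∑ i, p i • w i
  have hcentered : ∑ k, p k • (w k - c) = 0 := by rw [sum_smul_sub_eq hp1, sub_self]
  have hcross : ∑ k, p k * (2 * ⟪w k - c, c - x⟫) = 0 := by
    simp_rw [mul_left_comm (p _), ← mul_sum, ← real_inner_smul_left, ← sum_inner, hcentered,
      inner_zero_left, mul_zero]
  have hsplit (k : ι) : w k - x = (w k - c) + (c - x) := by abel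
  simp only [hsplit, norm_add_sq_real, mul_add, sum_add_distrib, hcross, ← sum_mul, hp1,
    one_mul, add_zero]

theorem sum_prod_mul_le_of_le_add_inner (hp : ∀ k, 0 ≤ p k) (hp1 : ∑ k, p k = 1)
    {f : E → ℝ} {g : E} {L : ℝ} (w : ι → E)
    (hf : ∀ y, f y ≤ f (∑ k, p k • w k) + ⟪g, y - ∑ k, p k • w k⟫
      + L / 2 * ‖y - ∑ k, p k • w k‖ ^ 2)
    {K : ℕ} (hK : K ≠ 0) :
    ∑ s : Fin K → ι, (∏ j, p (s j)) * f ((1 / (K : ℝ)) • ∑ j, w (s j))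
      ≤ f (∑ k, p k • w k) + L / (2 * K) * ∑ k, p k * ‖w k - ∑ i, p i • w i‖ ^ 2 := by
  set c := ∑ i, p i • w i
  set v := fun k => w k - c
  have hv : ∑ k, p k • v k = 0 := by rw [sum_smul_sub_eq hp1, sub_self]
  have hK' : (K : ℝ) ≠ 0 := Nat.cast_ne_zero.mpr hK
  have hmean (s : Fin K → ι) :
      (1 / (K : ℝ)) • ∑ j, w (s j) - c = (1 / (K : ℝ)) • ∑ j, v (s j) := by
    rw [sum_sub_distrib, sum_const, card_univ, Fintype.card_fin, smul_sub,
      ← Nat.cast_smul_eq_nsmul ℝ, smul_smul, one_div, inv_mul_cancel₀ hK', one_smul]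
  calc ∑ s : Fin K → ι, (∏ j, p (s j)) * f ((1 / (K : ℝ)) • ∑ j, w (s j))
      ≤ ∑ s : Fin K → ι, (∏ j, p (s j)) * (f c + (1 / (K : ℝ)) * ⟪g, ∑ j, v (s j)⟫
          + L / (2 * K ^ 2) * ‖∑ j, v (s j)‖ ^ 2) := by
        gcongr with s
        · exact prod_nonneg fun j _ => hp (s j)
        · refine (hf _).trans_eq ?_
          rw [hmean, real_inner_smul_right, norm_smul, mul_pow, norm_div, norm_one,
            RCLike.norm_natCast]
          ring
    _ = f c + L / (2 * K) * ∑ k, p k * ‖v k‖ ^ 2 := by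
        have hinner : ∑ s : Fin K → ι, (∏ j, p (s j)) * ⟪g, ∑ j, v (s j)⟫ = 0 := by
          simp_rw [← real_inner_smul_right, ← inner_sum, sum_prod_smul_sum_eq_zero hp1 hv,
            inner_zero_right]
        simp only [mul_add, sum_add_distrib, ← sum_mul, sum_prod_apply_eq_one hp1, one_mul,
          mul_left_comm _ (1 / (K : ℝ)), mul_left_comm _ (L / (2 * K ^ 2)), ← mul_sum, hinner,
          mul_zero, add_zero, sum_prod_mul_norm_sum_sq_eq hp1 hv]
        field_simp

theorem sum_prod_mul_le_add_inner_add (hp : ∀ k, 0 ≤ p k) (hp1 : ∑ k, p k = 1)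
    {f : E → ℝ} {G : E → E} {L : ℝ} (hL : 0 ≤ L)
    (hf : ∀ x y, f y ≤ f x + ⟪G x, y - x⟫ + L / 2 * ‖y - x‖ ^ 2) (w : ι → E) (x : E)
    {K : ℕ} (hK : 1 ≤ K) :
    ∑ s : Fin K → ι, (∏ j, p (s j)) * f ((1 / (K : ℝ)) • ∑ j, w (s j))
      ≤ f x + ⟪G x, ∑ k, p k • w k - x⟫ + L / 2 * ∑ k, p k * ‖w k - x‖ ^ 2 := by
  set c := ∑ k, p k • w k
  have hK_half : L / (2 * K) ≤ L / 2 :=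
    div_le_div_of_nonneg_left hL two_pos (by norm_cast; omega)
  calc ∑ s : Fin K → ι, (∏ j, p (s j)) * f ((1 / (K : ℝ)) • ∑ j, w (s j))
      ≤ f c + L / (2 * K) * ∑ k, p k * ‖w k - c‖ ^ 2 :=
        sum_prod_mul_le_of_le_add_inner hp hp1 w (hf c) (by omega)
    _ ≤ f x + ⟪G x, c - x⟫ + L / 2 * ‖c - x‖ ^ 2 + L / 2 * ∑ k, p k * ‖w k - c‖ ^ 2 := by
        gcongr
        · exact hf x c
        · exact sum_nonneg fun k _ => mul_nonneg (hp k) (sq_nonneg _)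
    _ = f x + ⟪G x, c - x⟫ + L / 2 * ∑ k, p k * ‖w k - x‖ ^ 2 := by
        rw [sum_mul_norm_sub_sq_eq hp1 w x]
        ring

end Sampling

theorem sum_mul_le_of_sum_mul_sq_le {ι : Type*} [Fintype ι] {p a : ι → ℝ} (hp : ∀ k, 0 ≤ p k)
    (hp1 : ∑ k, p k = 1) {M : ℝ} (hM : 0 ≤ M) (h : ∑ k, p k * a k ^ 2 ≤ M ^ 2) :
    ∑ k, p k * a k ≤ M := by
  have hjensen := (even_two.convexOn_pow (𝕜 := ℝ)).map_sum_le (fun k _ => hp k) hp1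
    (fun k _ => mem_univ (a k))
  simp only [smul_eq_mul] at hjensen
  exact le_of_sq_le_sq (hjensen.trans h) hM

theorem LipschitzWith.sum_smul {ι α V : Type*} [Fintype ι] [PseudoMetricSpace α]
    [SeminormedAddCommGroup V] [NormedSpace ℝ V] {p : ι → ℝ} (hp : ∀ k, 0 ≤ p k)
    (hp1 : ∑ k, p k = 1) {G : ι → α → V} {L : ℝ≥0} (hG : ∀ k, LipschitzWith L (G k)) :
    LipschitzWith L fun x => ∑ k, p k • G k x := by
  refine LipschitzWith.of_dist_le_mul fun x y => ?_
  rw [dist_eq_norm, ← sum_sub_distrib]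
  calc ‖∑ k, (p k • G k x - p k • G k y)‖
      ≤ ∑ k, p k * ‖G k x - G k y‖ := by
        refine (norm_sum_le _ _).trans_eq (sum_congr rfl fun k _ => ?_)
        rw [← smul_sub, norm_smul, Real.norm_of_nonneg (hp k)]
    _ ≤ ∑ k, p k * (L * dist x y) := by
        gcongr with k
        · exact hp k
        · rw [← dist_eq_norm]; exact (hG k).dist_le_mul x y
    _ = L * dist x y := by rw [← sum_mul, hp1, one_mul]

section Smooth

variable {E : Type*} [NormedAddCommGroup E] [InnerProductSpace ℝ E] [CompleteSpace E]

theorem ConvexOn.hasFDerivAt_apply_sub_le {F : Type*} [NormedAddCommGroup F] [NormedSpace ℝ F]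
    {φ : F → ℝ} (hφ : ConvexOn ℝ univ φ) {x : F} {φ' : F →L[ℝ] ℝ} (hφ' : HasFDerivAt φ φ' x)
    (y : F) : φ' (y - x) ≤ φ y - φ x := by
  have hline : HasDerivAt (φ ∘ lineMap (k := ℝ) x y) (φ' (y - x)) 0 :=
    (lineMap_apply_zero x y (k := ℝ) ▸ hφ').comp_hasDerivAt (0 : ℝ) hasDerivAt_lineMap
  simpa [slope_def_field] using
    (hφ.comp_affineMap (lineMap x y)).le_slope_of_hasDerivAt (mem_univ 0) (mem_univ 1) one_pos
      hline

theorem ConvexOn.hasFDerivAt_apply_sub_le_apply_sub {F : Type*} [NormedAddCommGroup F]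
    [NormedSpace ℝ F] {φ : F → ℝ} (hφ : ConvexOn ℝ univ φ) {x y : F} {φx φy : F →L[ℝ] ℝ}
    (hx : HasFDerivAt φ φx x) (hy : HasFDerivAt φ φy y) : φx (y - x) ≤ φy (y - x) := by
  have hxy := hφ.hasFDerivAt_apply_sub_le hx y
  have hyx := hφ.hasFDerivAt_apply_sub_le hy x
  rw [← neg_sub y x, map_neg] at hyx
  linarith

theorem neg_mul_norm_sq_le_inner_gradient_sub {F : E → ℝ} {m : ℝ} (hF : Differentiable ℝ F)
    (hconv : ConvexOn ℝ univ fun w => F w + m / 2 * ‖w‖ ^ 2) (x y : E) :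
    -(m * ‖y - x‖ ^ 2) ≤ ⟪∇ F y - ∇ F x, y - x⟫ := by
  have hφ (z : E) := (hF z).hasGradientAt.hasFDerivAt.add
    ((hasStrictFDerivAt_norm_sq z).hasFDerivAt.const_mul (m / 2))
  have hmono := hconv.hasFDerivAt_apply_sub_le_apply_sub (hφ x) (hφ y)
  have hsq : ⟪y, y - x⟫ - ⟪x, y - x⟫ = ‖y - x‖ ^ 2 := by
    rw [← inner_sub_left, real_inner_self_eq_norm_sq]
  simp only [_root_.add_apply, _root_.smul_apply,
    InnerProductSpace.toDual_apply_apply, innerSL_apply_apply, smul_eq_mul, nsmul_eq_mul,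
    Nat.cast_ofNat] at hmono
  rw [inner_sub_left]
  linear_combination hmono + m * hsq

theorem le_add_inner_gradient_add_of_lipschitzWith {f : E → ℝ} {L : ℝ≥0}
    (hf : Differentiable ℝ f) (hlip : LipschitzWith L (∇ f)) (x y : E) :
    f y ≤ f x + ⟪∇ f x, y - x⟫ + L / 2 * ‖y - x‖ ^ 2 := by
  set ψ : ℝ → ℝ := fun t =>
    f (lineMap x y t) - t * ⟪∇ f x, y - x⟫ - L / 2 * t ^ 2 * ‖y - x‖ ^ 2
  have hψ (t : ℝ) : HasDerivAt ψ
      (⟪∇ f (lineMap x y t) - ∇ f x, y - x⟫ - L * t * ‖y - x‖ ^ 2) t := by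
    have hf_line : HasDerivAt (fun t => f (lineMap x y t)) ⟪∇ f (lineMap x y t), y - x⟫ t :=
      (hf _).hasGradientAt.hasFDerivAt.comp_hasDerivAt t hasDerivAt_lineMap
    refine ((hf_line.sub ((hasDerivAt_id t).mul_const _)).sub
      (((hasDerivAt_pow 2 t).const_mul (L / 2 : ℝ)).mul_const (‖y - x‖ ^ 2))).congr_deriv ?_
    rw [inner_sub_left]
    push_cast
    ring
  have hψ_nonpos (t : ℝ) (ht : 0 < t) :
      ⟪∇ f (lineMap x y t) - ∇ f x, y - x⟫ - L * t * ‖y - x‖ ^ 2 ≤ 0 := by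
    have hdist : ‖∇ f (lineMap x y t) - ∇ f x‖ ≤ L * (t * ‖y - x‖) :=
      calc ‖∇ f (lineMap x y t) - ∇ f x‖ ≤ L * ‖lineMap x y t - x‖ := by
            simpa only [dist_eq_norm] using hlip.dist_le_mul (lineMap x y t) x
        _ = L * (t * ‖y - x‖) := by
            rw [← vsub_eq_sub, lineMap_vsub_left, vsub_eq_sub, norm_smul,
              Real.norm_of_nonneg ht.le]
    refine sub_nonpos.2 ?_
    calc ⟪∇ f (lineMap x y t) - ∇ f x, y - x⟫
        ≤ ‖∇ f (lineMap x y t) - ∇ f x‖ * ‖y - x‖ := real_inner_le_norm _ _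
      _ ≤ L * (t * ‖y - x‖) * ‖y - x‖ := by gcongr
      _ = L * t * ‖y - x‖ ^ 2 := by ring
  have hanti : AntitoneOn ψ (Ici 0) := by
    refine antitoneOn_of_hasDerivWithinAt_nonpos (convex_Ici 0)
      (fun t _ => (hψ t).continuousAt.continuousWithinAt) (fun t _ => (hψ t).hasDerivWithinAt) ?_
    simpa only [interior_Ici, Set.mem_Ioi] using hψ_nonpos
  have := hanti (mem_Ici.2 le_rfl) (mem_Ici.2 zero_le_one) zero_le_one
  simp only [ψ, lineMap_apply_zero, lineMap_apply_one] at this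
  linarith

theorem gradient_sum_mul {ι : Type*} [Fintype ι] (p : ι → ℝ) {F : ι → E → ℝ} {x : E}
    (hF : ∀ k, DifferentiableAt ℝ (F k) x) :
    ∇ (fun w => ∑ k, p k * F k w) x = ∑ k, p k • ∇ (F k) x := by
  refine HasGradientAt.gradient ?_
  rw [hasGradientAt_iff_hasFDerivAt, map_sum]
  simp_rw [map_smul]
  exact HasFDerivAt.fun_sum fun k _ => (hF k).hasGradientAt.hasFDerivAt.const_mul (p k)

theorem sum_mul_le_add_inner_gradient_add {ι : Type*} [Fintype ι] {p : ι → ℝ}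
    (hp : ∀ k, 0 ≤ p k) (hp1 : ∑ k, p k = 1) {F : ι → E → ℝ} {L : ℝ≥0}
    (hF : ∀ k, Differentiable ℝ (F k)) (hlip : ∀ k, LipschitzWith L (∇ (F k))) (x y : E) :
    ∑ k, p k * F k y ≤ ∑ k, p k * F k x + ⟪∇ (fun w => ∑ k, p k * F k w) x, y - x⟫
      + L / 2 * ‖y - x‖ ^ 2 := by
  have hgrad : ∇ (fun w => ∑ k, p k * F k w) = fun z => ∑ k, p k • ∇ (F k) z :=
    funext fun z => gradient_sum_mul p fun k => (hF k).differentiableAt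
  exact le_add_inner_gradient_add_of_lipschitzWith (by fun_prop)
    (hgrad ▸ LipschitzWith.sum_smul hp hp1 hlip) x y

end Smooth

section Prox

variable {E : Type*} [NormedAddCommGroup E] [InnerProductSpace ℝ E]

theorem norm_le_of_inexact_prox {a b u : E} {m μ γ : ℝ} (hμ : m < μ)
    (hmono : -(m * ‖u‖ ^ 2) ≤ ⟪b - a, u⟫) (hinexact : ‖b + μ • u‖ ≤ γ * ‖a‖) :
    ‖u‖ ≤ (1 + γ) / (μ - m) * ‖a‖ := by
  have hγa : 0 ≤ (1 + γ) * ‖a‖ := by nlinarith [norm_nonneg (b + μ • u), norm_nonneg a]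
  have key : (μ - m) * ‖u‖ * ‖u‖ ≤ (1 + γ) * ‖a‖ * ‖u‖ :=
    calc (μ - m) * ‖u‖ * ‖u‖ ≤ ⟪(b + μ • u) - a, u⟫ := by
          rw [add_sub_right_comm, inner_add_left, real_inner_smul_left,
            real_inner_self_eq_norm_sq]
          nlinarith
      _ ≤ ‖(b + μ • u) - a‖ * ‖u‖ := real_inner_le_norm _ _
      _ ≤ (γ * ‖a‖ + ‖a‖) * ‖u‖ := by
          gcongr
          exact (norm_sub_le _ _).trans (by gcongr)
      _ = (1 + γ) * ‖a‖ * ‖u‖ := by ring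
  rw [div_mul_eq_mul_div, le_div_iff₀ (sub_pos.2 hμ), mul_comm]
  rcases (norm_nonneg u).eq_or_lt with hu | hu
  · rw [← hu, mul_zero]
    exact hγa
  · exact le_of_mul_le_mul_right key hu

theorem mul_inner_sum_smul_le {ι : Type*} [Fintype ι] {p : ι → ℝ} (hp : ∀ k, 0 ≤ p k)
    {a b u : ι → E} {μ γ L : ℝ} (hinexact : ∀ k, ‖b k + μ • u k‖ ≤ γ * ‖a k‖)
    (hlip : ∀ k, ‖b k - a k‖ ≤ L * ‖u k‖) :
    μ * ⟪∑ k, p k • a k, ∑ k, p k • u k⟫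
      ≤ -‖∑ k, p k • a k‖ ^ 2 + ‖∑ k, p k • a k‖ * ∑ k, p k * (γ * ‖a k‖ + L * ‖u k‖) := by
  set g := ∑ k, p k • a k
  have hsplit : μ • ∑ k, p k • u k = ∑ k, p k • ((b k + μ • u k) - (b k - a k)) - g := by
    rw [smul_sum, ← sum_sub_distrib]
    exact sum_congr rfl fun k _ => by module
  have hnorm : ‖∑ k, p k • ((b k + μ • u k) - (b k - a k))‖
      ≤ ∑ k, p k * (γ * ‖a k‖ + L * ‖u k‖) := by
    refine (norm_sum_le _ _).trans (sum_le_sum fun k _ => ?_)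
    rw [norm_smul, Real.norm_of_nonneg (hp k)]
    gcongr
    · exact hp k
    · exact (norm_sub_le _ _).trans (add_le_add (hinexact k) (hlip k))
  calc μ * ⟪g, ∑ k, p k • u k⟫
      = ⟪g, ∑ k, p k • ((b k + μ • u k) - (b k - a k))⟫ - ‖g‖ ^ 2 := by
        rw [← real_inner_smul_right, hsplit, inner_sub_right, real_inner_self_eq_norm_sq]
    _ ≤ ‖g‖ * ∑ k, p k * (γ * ‖a k‖ + L * ‖u k‖) - ‖g‖ ^ 2 := by
        gcongr
        exact (real_inner_le_norm _ _).trans (by gcongr)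
    _ = _ := by ring

theorem sum_mul_norm_sq_le_of_inexact_prox {ι : Type*} [Fintype ι] {p : ι → ℝ}
    (hp : ∀ k, 0 ≤ p k) {a b u : ι → E} {m μ γ B : ℝ} (hμ : m < μ)
    (hmono : ∀ k, -(m * ‖u k‖ ^ 2) ≤ ⟪b k - a k, u k⟫)
    (hinexact : ∀ k, ‖b k + μ • u k‖ ≤ γ * ‖a k‖)
    (hdissim : ∑ k, p k * ‖a k‖ ^ 2 ≤ B ^ 2 * ‖∑ k, p k • a k‖ ^ 2) :
    ∑ k, p k * ‖u k‖ ^ 2 ≤ ((1 + γ) / (μ - m) * B) ^ 2 * ‖∑ k, p k • a k‖ ^ 2 := by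
  set c := (1 + γ) / (μ - m)
  calc ∑ k, p k * ‖u k‖ ^ 2 ≤ ∑ k, p k * (c * ‖a k‖) ^ 2 := by
        gcongr with k
        · exact hp k
        · exact norm_le_of_inexact_prox hμ (hmono k) (hinexact k)
    _ = c ^ 2 * ∑ k, p k * ‖a k‖ ^ 2 := by
        rw [mul_sum]
        exact sum_congr rfl fun k _ => by ring
    _ ≤ (c * B) ^ 2 * ‖∑ k, p k • a k‖ ^ 2 := by
        rw [mul_pow, mul_assoc]
        gcongr

theorem inner_sum_smul_le_of_inexact_prox {ι : Type*} [Fintype ι] {p : ι → ℝ}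
    (hp : ∀ k, 0 ≤ p k) (hp1 : ∑ k, p k = 1) {a b u : ι → E} {m μ γ L B : ℝ} (hm : 0 ≤ m)
    (hμ : m < μ) (hγ : 0 ≤ γ) (hL : 0 ≤ L) (hB : 0 ≤ B)
    (hmono : ∀ k, -(m * ‖u k‖ ^ 2) ≤ ⟪b k - a k, u k⟫)
    (hinexact : ∀ k, ‖b k + μ • u k‖ ≤ γ * ‖a k‖) (hlip : ∀ k, ‖b k - a k‖ ≤ L * ‖u k‖)
    (hdissim : ∑ k, p k * ‖a k‖ ^ 2 ≤ B ^ 2 * ‖∑ k, p k • a k‖ ^ 2) :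
    ⟪∑ k, p k • a k, ∑ k, p k • u k⟫
      ≤ (-1 + (γ + L * ((1 + γ) / (μ - m))) * B) / μ * ‖∑ k, p k • a k‖ ^ 2 := by
  set c := (1 + γ) / (μ - m)
  set g := ∑ k, p k • a k
  have hc : 0 ≤ c := div_nonneg (by linarith) (sub_pos.2 hμ).le
  have hstep (k : ι) : ‖u k‖ ≤ c * ‖a k‖ := norm_le_of_inexact_prox hμ (hmono k) (hinexact k)
  have hmean : ∑ k, p k * ‖a k‖ ≤ B * ‖g‖ :=
    sum_mul_le_of_sum_mul_sq_le hp hp1 (by positivity) (by rwa [mul_pow])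
  have herror : ∑ k, p k * (γ * ‖a k‖ + L * ‖u k‖) ≤ (γ + L * c) * (B * ‖g‖) := by
    refine le_trans ?_ (mul_le_mul_of_nonneg_left hmean (by positivity))
    rw [mul_sum]
    refine sum_le_sum fun k _ => ?_
    nlinarith [mul_le_mul_of_nonneg_left (hstep k) (mul_nonneg (hp k) hL)]
  rw [div_mul_eq_mul_div, le_div_iff₀ (hm.trans_lt hμ), mul_comm]
  nlinarith [mul_inner_sum_smul_le hp hinexact hlip,
    mul_le_mul_of_nonneg_left herror (norm_nonneg g)]

end Prox

theorem fedprox_rate_le {L m μ B γ ρ : ℝ} {K : ℕ} (hL : 0 ≤ L) (hm : 0 ≤ m) (hμ : m < μ)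
    (hB : 0 ≤ B) (hγ : 0 ≤ γ)
    (hρ : ρ = 1 / μ - γ * B / μ
        - √2 * B * (1 + γ) / ((μ - m) * √K)
        - L * B * (1 + γ) / ((μ - m) * μ)
        - L * (1 + γ) ^ 2 * B ^ 2 / (2 * (μ - m) ^ 2)
        - L * B ^ 2 * (1 + γ) ^ 2 * (2 * √(2 * K) + 2) / ((μ - m) ^ 2 * K)) :
    ρ ≤ (1 - (γ + L * ((1 + γ) / (μ - m))) * B) / μ - L / 2 * ((1 + γ) / (μ - m) * B) ^ 2 := by
  have hμ0 : μ ≠ 0 := (hm.trans_lt hμ).ne'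
  have hsqrt_term : 0 ≤ √2 * B * (1 + γ) / ((μ - m) * √K) :=
    div_nonneg (by positivity) (by positivity)
  have hvar_term : 0 ≤ L * B ^ 2 * (1 + γ) ^ 2 * (2 * √(2 * K) + 2) / ((μ - m) ^ 2 * K) := by
    positivity
  have hρ₀ : 1 / μ - γ * B / μ - L * B * (1 + γ) / ((μ - m) * μ)
      - L * (1 + γ) ^ 2 * B ^ 2 / (2 * (μ - m) ^ 2)
      = (1 - (γ + L * ((1 + γ) / (μ - m))) * B) / μ - L / 2 * ((1 + γ) / (μ - m) * B) ^ 2 := by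
    field_simp
    ring
  rw [hρ]
  linarith

theorem fedprox_nonconvex_descent_general
    {E : Type*} [NormedAddCommGroup E] [InnerProductSpace ℝ E] [CompleteSpace E]
    {N : ℕ} (p : Fin N → ℝ)
    (hp : ∀ k, 0 ≤ p k) (hp1 : ∑ k, p k = 1)
    (F : Fin N → E → ℝ) (f : E → ℝ) (hf : ∀ w, f w = ∑ k, p k * F k w)
    {L : ℝ} (hL : 0 ≤ L)
    (hFdiff : ∀ k, Differentiable ℝ (F k))
    (hFlip : ∀ k, LipschitzWith (Real.toNNReal L) (gradient (F k)))
    {Lm μ : ℝ} (hLm : 0 ≤ Lm) (hμ : Lm < μ)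
    (hcurv : ∀ k, ConvexOn ℝ Set.univ (fun w => F k w + (Lm / 2) * ‖w‖ ^ 2))
    (wt : E) {B : ℝ} (hB : 0 ≤ B)
    (hdissim : ∑ k, p k * ‖gradient (F k) wt‖ ^ 2 ≤ B ^ 2 * ‖gradient f wt‖ ^ 2)
    {γ : ℝ} (hγ0 : 0 ≤ γ)
    (wplus : Fin N → E)
    (hinexact : ∀ k,
      ‖gradient (F k) (wplus k) + μ • (wplus k - wt)‖ ≤ γ * ‖gradient (F k) wt‖)
    {K : ℕ} (hK : 1 ≤ K)
    (ρ : ℝ)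
    (hρ : ρ = 1 / μ - γ * B / μ
        - Real.sqrt 2 * B * (1 + γ) / ((μ - Lm) * Real.sqrt K)
        - L * B * (1 + γ) / ((μ - Lm) * μ)
        - L * (1 + γ) ^ 2 * B ^ 2 / (2 * (μ - Lm) ^ 2)
        - L * B ^ 2 * (1 + γ) ^ 2 * (2 * Real.sqrt (2 * K) + 2) / ((μ - Lm) ^ 2 * K)) :
    ∑ s : Fin K → Fin N, (∏ j, p (s j)) * f ((1 / (K : ℝ)) • ∑ j, wplus (s j))
      ≤ f wt - ρ * ‖gradient f wt‖ ^ 2 := by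
  have hg : gradient f wt = ∑ k, p k • gradient (F k) wt := by
    rw [show f = _ from funext hf]
    exact gradient_sum_mul p fun k => (hFdiff k).differentiableAt
  set c := (1 + γ) / (μ - Lm)
  set g := gradient f wt
  have hsmooth (x y : E) : f y ≤ f x + ⟪gradient f x, y - x⟫ + L / 2 * ‖y - x‖ ^ 2 := by
    simpa only [← hf, Real.coe_toNNReal L hL] using
      sum_mul_le_add_inner_gradient_add hp hp1 hFdiff hFlip x y
  have hmono (k : Fin N) :=
    neg_mul_norm_sq_le_inner_gradient_sub (hFdiff k) (hcurv k) wt (wplus k)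
  have hdrift (k : Fin N) :
      ‖gradient (F k) (wplus k) - gradient (F k) wt‖ ≤ L * ‖wplus k - wt‖ := by
    simpa only [dist_eq_norm, Real.coe_toNNReal L hL] using (hFlip k).dist_le_mul _ _
  rw [hg] at hdissim
  have hQ := sum_mul_norm_sq_le_of_inexact_prox hp hμ hmono hinexact hdissim
  have hinner := inner_sum_smul_le_of_inexact_prox hp hp1 hLm hμ hγ0 hL hB hmono hinexact hdrift
    hdissim
  rw [← hg, sum_smul_sub_eq hp1] at hinner
  rw [← hg] at hQ
  calc ∑ s : Fin K → Fin N, (∏ j, p (s j)) * f ((1 / (K : ℝ)) • ∑ j, wplus (s j))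
      ≤ f wt + ⟪g, ∑ k, p k • wplus k - wt⟫ + L / 2 * ∑ k, p k * ‖wplus k - wt‖ ^ 2 :=
        sum_prod_mul_le_add_inner_add hp hp1 hL hsmooth wplus wt hK
    _ ≤ f wt + (-1 + (γ + L * c) * B) / μ * ‖g‖ ^ 2 + L / 2 * ((c * B) ^ 2 * ‖g‖ ^ 2) := by
        gcongr
    _ = f wt - ((1 - (γ + L * c) * B) / μ - L / 2 * (c * B) ^ 2) * ‖g‖ ^ 2 := by ring
    _ ≤ f wt - ρ * ‖g‖ ^ 2 := by
        gcongr
        exact fedprox_rate_le hL hLm hμ hB hγ0 hρ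

/-- Non-convex FedProx convergence (B-local dissimilarity): expected decrease of the
global objective after one FedProx round. -/
theorem fedprox_nonconvex_descent
    {E : Type*} [NormedAddCommGroup E] [InnerProductSpace ℝ E] [CompleteSpace E]
    {N : ℕ} (hN : 1 ≤ N) (p : Fin N → ℝ)
    (hp : ∀ k, 0 ≤ p k) (hp1 : ∑ k, p k = 1)
    (F : Fin N → E → ℝ) (f : E → ℝ) (hf : ∀ w, f w = ∑ k, p k * F k w)
    {L : ℝ} (hL : 0 ≤ L)
    (hFdiff : ∀ k, Differentiable ℝ (F k))
    (hFlip : ∀ k, LipschitzWith (Real.toNNReal L) (gradient (F k)))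
    {Lm μ : ℝ} (hLm : 0 ≤ Lm) (hμ : Lm < μ)
    (hcurv : ∀ k, ConvexOn ℝ Set.univ (fun w => F k w + (Lm / 2) * ‖w‖ ^ 2))
    (wt : E) {B : ℝ} (hB : 0 ≤ B)
    (hdissim : ∑ k, p k * ‖gradient (F k) wt‖ ^ 2 ≤ B ^ 2 * ‖gradient f wt‖ ^ 2)
    {γ : ℝ} (hγ0 : 0 ≤ γ) (hγ1 : γ ≤ 1)
    (wplus : Fin N → E)
    (hinexact : ∀ k,
      ‖gradient (F k) (wplus k) + μ • (wplus k - wt)‖ ≤ γ * ‖gradient (F k) wt‖)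
    {K : ℕ} (hK : 1 ≤ K)
    (ρ : ℝ)
    (hρ : ρ = 1 / μ - γ * B / μ
        - Real.sqrt 2 * B * (1 + γ) / ((μ - Lm) * Real.sqrt K)
        - L * B * (1 + γ) / ((μ - Lm) * μ)
        - L * (1 + γ) ^ 2 * B ^ 2 / (2 * (μ - Lm) ^ 2)
        - L * B ^ 2 * (1 + γ) ^ 2 * (2 * Real.sqrt (2 * K) + 2) / ((μ - Lm) ^ 2 * K)) :
    ∑ s : Fin K → Fin N, (∏ j, p (s j)) * f ((1 / (K : ℝ)) • ∑ j, wplus (s j))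
      ≤ f wt - ρ * ‖gradient f wt‖ ^ 2 :=
  fedprox_nonconvex_descent_general p hp hp1 F f hf hL hFdiff hFlip hLm hμ hcurv wt hB hdissim hγ0
    wplus hinexact hK ρ hρ
end

section
/- Convergence of FedProx in the convex case with exact local solves. Assume each F k is convex and differentiable with L-Lipschitz gradient, L > 0. Let wᵗ ∈ E, let the local functions be B-dissimilar at wᵗ with 1 ≤ B, let K be a natural number with 16·B² ≤ K, set μ := 6·L·B², and for each device k let w k⁺ solve the proximal subproblem exactly, i.e. ∇F k (w k⁺) + μ·(w k⁺ − wᵗ) = 0. Then the expected objective after one FedProx round satisfies ∑_{s : Fin K → Fin N} (∏ j, p (s j)) · f((1/K)·∑ j, w (s j)⁺) ≤ f(wᵗ) − (1/(24·L·B²))·‖∇f(wᵗ)‖². -/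
/-!
The gradient `∇f = ∑ₖ pₖ ∇Fₖ` is `L`-Lipschitz, so the descent lemma and Jensen's inequality bound
`f` at a sampled average by `f wᵗ` plus the sample mean of
`qₖ = ⟪∇f wᵗ, w⁺ₖ - wᵗ⟫ + L/2 ‖w⁺ₖ - wᵗ‖²`; averaging over i.i.d. samples turns this mean into
`∑ₖ pₖ qₖ`. The exact proximal solve says `μ (w⁺ₖ - wᵗ) = -∇Fₖ(w⁺ₖ)`, whence
`‖w⁺ₖ - wᵗ‖ ≤ ‖∇Fₖ wᵗ‖ / (μ - L)`, and `μ ∑ₖ pₖ (w⁺ₖ - wᵗ)` differs from `-∇f wᵗ` by at most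
`L ∑ₖ pₖ ‖w⁺ₖ - wᵗ‖` in norm.
By `B`-dissimilarity and Cauchy–Schwarz both parts of `∑ₖ pₖ qₖ` are bounded by multiples of `‖∇f wᵗ‖²`,
and for `μ = 6 L B²` the total coefficient is at most `-1 / (24 L B²)`.
-/

open Finset
open scoped RealInnerProductSpace NNReal

section Sampling

variable {ι α : Type*} [Fintype ι] [DecidableEq ι] [Fintype α] {p : α → ℝ}

lemma sum_prod_eq_one (hp1 : ∑ a, p a = 1) : ∑ s : ι → α, ∏ j, p (s j) = 1 := by
  rw [← Fintype.prod_sum, hp1, prod_const_one]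

lemma sum_prod_mul_apply (hp1 : ∑ a, p a = 1) (q : α → ℝ) (i : ι) :
    ∑ s : ι → α, (∏ j, p (s j)) * q (s i) = ∑ a, p a * q a := by
  have hfactor : ∀ s : ι → α,
      (∏ j, p (s j)) * q (s i) = ∏ j, p (s j) * if j = i then q (s j) else 1 := fun s => by
    rw [prod_mul_distrib, prod_ite_eq' univ i, if_pos (mem_univ i)]
  rw [sum_congr rfl fun s _ => hfactor s,
    ← Fintype.prod_sum fun j a => p a * if j = i then q a else 1,
    prod_eq_single i (fun j _ hj => by simp [hj, hp1]) (by simp)]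
  simp

lemma sum_prod_mul_le_add_sum_mul [Nonempty ι] (hp : ∀ a, 0 ≤ p a) (hp1 : ∑ a, p a = 1)
    {φ : (ι → α) → ℝ} (c : ℝ) (q : α → ℝ)
    (hφ : ∀ s, φ s ≤ c + (Fintype.card ι : ℝ)⁻¹ * ∑ j, q (s j)) :
    ∑ s : ι → α, (∏ j, p (s j)) * φ s ≤ c + ∑ a, p a * q a := by
  have hcard : (Fintype.card ι : ℝ) ≠ 0 := Nat.cast_ne_zero.2 Fintype.card_ne_zero
  calc ∑ s : ι → α, (∏ j, p (s j)) * φ s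
      ≤ ∑ s : ι → α, (∏ j, p (s j)) * (c + (Fintype.card ι : ℝ)⁻¹ * ∑ j, q (s j)) :=
        sum_le_sum fun s _ => mul_le_mul_of_nonneg_left (hφ s) (prod_nonneg fun j _ => hp _)
    _ = c + ∑ a, p a * q a := by
        have hmean : ∑ s : ι → α, (∏ j, p (s j)) * ∑ j, q (s j)
            = Fintype.card ι * ∑ a, p a * q a := by
          simp_rw [mul_sum]
          rw [sum_comm]
          simp [sum_prod_mul_apply hp1, mul_sum]
        simp_rw [mul_add, sum_add_distrib, ← sum_mul, sum_prod_eq_one hp1, one_mul,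
          mul_left_comm _ (Fintype.card ι : ℝ)⁻¹, ← mul_sum, hmean, inv_mul_cancel_left₀ hcard]

end Sampling

lemma norm_sum_smul_le {ι E : Type*} [SeminormedAddCommGroup E] [NormedSpace ℝ E] (s : Finset ι)
    {w : ι → ℝ} (hw : ∀ i ∈ s, 0 ≤ w i) (u : ι → E) :
    ‖∑ i ∈ s, w i • u i‖ ≤ ∑ i ∈ s, w i * ‖u i‖ :=
  (norm_sum_le _ _).trans_eq <| sum_congr rfl fun i hi => by
    rw [norm_smul, Real.norm_of_nonneg (hw i hi)]

lemma sq_sum_mul_le_sum_mul_sq {ι : Type*} (s : Finset ι) {w : ι → ℝ} (hw : ∀ i ∈ s, 0 ≤ w i)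
    (hw1 : ∑ i ∈ s, w i = 1) (a : ι → ℝ) :
    (∑ i ∈ s, w i * a i) ^ 2 ≤ ∑ i ∈ s, w i * a i ^ 2 := by
  simpa [hw1] using sum_sq_le_sum_mul_sum_of_sq_le_mul s hw
    (fun i hi => mul_nonneg (hw i hi) (sq_nonneg (a i))) (fun i _ => (by ring_nf; rfl : _ ≤ _))

lemma sum_mul_le_of_sq_le {ι : Type*} (s : Finset ι) {p : ι → ℝ} (hp : ∀ i ∈ s, 0 ≤ p i)
    (hp1 : ∑ i ∈ s, p i = 1) {a : ι → ℝ} {b : ℝ} (hb : 0 ≤ b)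
    (h : ∑ i ∈ s, p i * a i ^ 2 ≤ b ^ 2) : ∑ i ∈ s, p i * a i ≤ b :=
  abs_le_of_sq_le_sq' ((sq_sum_mul_le_sum_mul_sq s hp hp1 a).trans h) hb |>.2

section NormedSpace

variable {E : Type*} [NormedAddCommGroup E] [NormedSpace ℝ E]

lemma lipschitzWith_sum_smul_of_sum_eq_one {ι : Type*} (s : Finset ι) {w : ι → ℝ}
    (hw : ∀ i ∈ s, 0 ≤ w i) (hw1 : ∑ i ∈ s, w i = 1) {G : ι → E → E} {K : ℝ≥0}
    (hG : ∀ i ∈ s, LipschitzWith K (G i)) :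
    LipschitzWith K fun x => ∑ i ∈ s, w i • G i x := by
  refine LipschitzWith.of_dist_le_mul fun x y => ?_
  rw [dist_eq_norm, ← sum_sub_distrib]
  simp_rw [← smul_sub]
  calc ‖∑ i ∈ s, w i • (G i x - G i y)‖ ≤ ∑ i ∈ s, w i * ‖G i x - G i y‖ := norm_sum_smul_le s hw _
    _ ≤ ∑ i ∈ s, w i * (K * dist x y) := by
        gcongr with i hi
        · exact hw i hi
        · rw [← dist_eq_norm]; exact (hG i hi).dist_le_mul x y
    _ = K * dist x y := by rw [← sum_mul, hw1, one_mul]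

lemma norm_sub_le_of_add_smul_sub_eq_zero {G : E → E} {K : ℝ≥0} (hG : LipschitzWith K G)
    {μ : ℝ} (hμ : K < μ) {w w' : E} (hw' : G w' + μ • (w' - w) = 0) :
    ‖w' - w‖ ≤ ‖G w‖ / (μ - K) := by
  have hnorm : μ * ‖w' - w‖ = ‖G w'‖ := by
    rw [eq_neg_of_add_eq_zero_left hw', norm_neg, norm_smul,
      Real.norm_of_nonneg (K.2.trans hμ.le)]
  rw [le_div_iff₀ (sub_pos.2 hμ)]
  linarith [hG.norm_sub_le w' w, norm_sub_norm_le (G w') (G w)]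

end NormedSpace

section Proximal

variable {E : Type*} [NormedAddCommGroup E] [InnerProductSpace ℝ E]

lemma mul_sum_mul_inner_le_of_add_smul_sub_eq_zero {ι : Type*} (s : Finset ι) {p : ι → ℝ}
    (hp : ∀ i ∈ s, 0 ≤ p i) {G : ι → E → E} {K : ℝ≥0} (hG : ∀ i ∈ s, LipschitzWith K (G i))
    {μ : ℝ} {w : E} {w' : ι → E} (hw' : ∀ i ∈ s, G i (w' i) + μ • (w' i - w) = 0) :
    μ * ∑ i ∈ s, p i * ⟪∑ j ∈ s, p j • G j w, w' i - w⟫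
      ≤ K * ‖∑ j ∈ s, p j • G j w‖ * ∑ i ∈ s, p i * ‖w' i - w‖ - ‖∑ j ∈ s, p j • G j w‖ ^ 2 := by
  set g := ∑ j ∈ s, p j • G j w
  have hsteps : μ • ∑ i ∈ s, p i • (w' i - w) = ∑ i ∈ s, p i • (G i w - G i (w' i)) - g := by
    rw [smul_sum, ← sum_sub_distrib]
    refine sum_congr rfl fun i hi => ?_
    rw [smul_comm, eq_neg_of_add_eq_zero_right (hw' i hi)]
    module
  calc μ * ∑ i ∈ s, p i * ⟪g, w' i - w⟫ = ⟪g, μ • ∑ i ∈ s, p i • (w' i - w)⟫ := by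
        simp_rw [real_inner_smul_right, inner_sum, real_inner_smul_right]
    _ = ⟪g, ∑ i ∈ s, p i • (G i w - G i (w' i))⟫ - ‖g‖ ^ 2 := by
        rw [hsteps, inner_sub_right, real_inner_self_eq_norm_sq]
    _ ≤ ‖g‖ * ∑ i ∈ s, p i * (K * ‖w' i - w‖) - ‖g‖ ^ 2 := by
        gcongr
        refine (real_inner_le_norm _ _).trans (mul_le_mul_of_nonneg_left ?_ (norm_nonneg g))
        refine (norm_sum_smul_le s hp _).trans (sum_le_sum fun i hi => ?_)
        rw [norm_sub_rev]
        exact mul_le_mul_of_nonneg_left ((hG i hi).norm_sub_le _ _) (hp i hi)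
    _ = K * ‖g‖ * ∑ i ∈ s, p i * ‖w' i - w‖ - ‖g‖ ^ 2 := by
        simp_rw [mul_left_comm (p _), ← mul_sum]; ring

lemma sum_mul_inner_add_sq_le_of_add_smul_sub_eq_zero {ι : Type*} (s : Finset ι) {p : ι → ℝ}
    (hp : ∀ i ∈ s, 0 ≤ p i) (hp1 : ∑ i ∈ s, p i = 1) {G : ι → E → E} {K : ℝ≥0}
    (hG : ∀ i ∈ s, LipschitzWith K (G i)) {μ : ℝ} (hμ : K < μ) {w : E} {w' : ι → E}
    (hw' : ∀ i ∈ s, G i (w' i) + μ • (w' i - w) = 0) {B : ℝ} (hB : 0 ≤ B)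
    (hdissim : ∑ i ∈ s, p i * ‖G i w‖ ^ 2 ≤ B ^ 2 * ‖∑ i ∈ s, p i • G i w‖ ^ 2) :
    ∑ i ∈ s, p i * (⟪∑ j ∈ s, p j • G j w, w' i - w⟫ + K / 2 * ‖w' i - w‖ ^ 2)
      ≤ ((K * B / (μ - K) - 1) / μ + K * B ^ 2 / (2 * (μ - K) ^ 2))
        * ‖∑ i ∈ s, p i • G i w‖ ^ 2 := by
  set g := ∑ i ∈ s, p i • G i w
  have hμK : 0 < μ - K := sub_pos.2 hμ
  have hμ0 : 0 < μ := K.2.trans_lt hμ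
  have hstep : ∀ i ∈ s, ‖w' i - w‖ ≤ ‖G i w‖ / (μ - K) := fun i hi =>
    norm_sub_le_of_add_smul_sub_eq_zero (hG i hi) hμ (hw' i hi)
  have hsq : ∑ i ∈ s, p i * ‖w' i - w‖ ^ 2 ≤ B ^ 2 * ‖g‖ ^ 2 / (μ - K) ^ 2 := by
    calc ∑ i ∈ s, p i * ‖w' i - w‖ ^ 2 ≤ ∑ i ∈ s, p i * (‖G i w‖ / (μ - K)) ^ 2 := by
          gcongr with i hi
          · exact hp i hi
          · exact hstep i hi
      _ ≤ B ^ 2 * ‖g‖ ^ 2 / (μ - K) ^ 2 := by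
          simp_rw [div_pow, mul_div_assoc', ← sum_div]
          gcongr
  have habs : ∑ i ∈ s, p i * ‖w' i - w‖ ≤ B * ‖g‖ / (μ - K) :=
    sum_mul_le_of_sq_le s hp hp1 (by positivity) (by rw [div_pow, mul_pow]; exact hsq)
  have hinner := mul_sum_mul_inner_le_of_add_smul_sub_eq_zero s hp hG hw'
  have hlin : ∑ i ∈ s, p i * ⟪g, w' i - w⟫ ≤ (K * B / (μ - K) - 1) / μ * ‖g‖ ^ 2 := by
    rw [div_mul_eq_mul_div, le_div_iff₀ hμ0, mul_comm]
    calc μ * ∑ i ∈ s, p i * ⟪g, w' i - w⟫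
        ≤ K * ‖g‖ * ∑ i ∈ s, p i * ‖w' i - w‖ - ‖g‖ ^ 2 := hinner
      _ ≤ K * ‖g‖ * (B * ‖g‖ / (μ - K)) - ‖g‖ ^ 2 := by gcongr
      _ = (K * B / (μ - K) - 1) * ‖g‖ ^ 2 := by field_simp
  calc ∑ i ∈ s, p i * (⟪g, w' i - w⟫ + K / 2 * ‖w' i - w‖ ^ 2)
      = ∑ i ∈ s, p i * ⟪g, w' i - w⟫ + K / 2 * ∑ i ∈ s, p i * ‖w' i - w‖ ^ 2 := by
        simp_rw [mul_add, sum_add_distrib, mul_left_comm (p _), ← mul_sum]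
    _ ≤ (K * B / (μ - K) - 1) / μ * ‖g‖ ^ 2 + K / 2 * (B ^ 2 * ‖g‖ ^ 2 / (μ - K) ^ 2) := by
        gcongr
    _ = _ := by field_simp

end Proximal

section Smooth

variable {E : Type*} [NormedAddCommGroup E] [InnerProductSpace ℝ E] [CompleteSpace E]

lemma le_add_inner_add_sq_of_lipschitzWith_gradient {f : E → ℝ} {g : E → E} {K : ℝ≥0}
    (hf : ∀ x, HasGradientAt f (g x) x) (hg : LipschitzWith K g) (x y : E) :
    f y ≤ f x + ⟪g x, y - x⟫ + K / 2 * ‖y - x‖ ^ 2 := by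
  set v := y - x
  -- The claim is `φ 1 ≤ φ 0`; `φ` is antitone on `[0, 1]` because `g` is `K`-Lipschitz.
  let φ : ℝ → ℝ := fun t => f (x + t • v) - t * ⟪g x, v⟫ - K / 2 * t ^ 2 * ‖v‖ ^ 2
  have hφ : ∀ t, HasDerivAt φ (⟪g (x + t • v) - g x, v⟫ - K * t * ‖v‖ ^ 2) t := by
    intro t
    have hline : HasDerivAt (fun t : ℝ => x + t • v) v t := by
      simpa using ((hasDerivAt_id t).smul_const v).const_add x
    have hcomp := (hf (x + t • v)).hasFDerivAt.comp_hasDerivAt t hline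
    simp only [InnerProductSpace.toDual_apply_apply] at hcomp
    refine ((hcomp.sub ((hasDerivAt_id t).mul_const ⟪g x, v⟫)).sub
      (((hasDerivAt_pow 2 t).const_mul (K / 2 : ℝ)).mul_const (‖v‖ ^ 2))).congr_deriv ?_
    rw [inner_sub_left]
    push_cast
    ring
  have hslope : ∀ t ∈ interior (Set.Icc (0 : ℝ) 1), deriv φ t ≤ 0 := by
    intro t ht
    rw [interior_Icc] at ht
    rw [(hφ t).deriv, sub_nonpos]
    calc ⟪g (x + t • v) - g x, v⟫ ≤ ‖g (x + t • v) - g x‖ * ‖v‖ := real_inner_le_norm _ _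
      _ ≤ K * ‖x + t • v - x‖ * ‖v‖ := by gcongr; exact hg.norm_sub_le _ _
      _ = K * t * ‖v‖ ^ 2 := by
        rw [add_sub_cancel_left, norm_smul, Real.norm_of_nonneg ht.1.le]; ring
  have hanti : AntitoneOn φ (Set.Icc 0 1) :=
    antitoneOn_of_deriv_nonpos (convex_Icc 0 1)
      (fun t _ => (hφ t).continuousAt.continuousWithinAt)
      (fun t _ => (hφ t).differentiableAt.differentiableWithinAt) hslope
  have h10 := hanti (Set.left_mem_Icc.2 zero_le_one) (Set.right_mem_Icc.2 zero_le_one) zero_le_one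
  simp only [φ, one_smul, zero_smul, add_zero, add_sub_cancel, v] at h10
  linarith

lemma le_add_sum_mul_of_lipschitzWith_gradient {ι : Type*} {f : E → ℝ} {g : E → E} {K : ℝ≥0}
    (hf : ∀ x, HasGradientAt f (g x) x) (hg : LipschitzWith K g) (s : Finset ι)
    {w : ι → ℝ} (hw : ∀ i ∈ s, 0 ≤ w i) (hw1 : ∑ i ∈ s, w i = 1) (v : ι → E) (x : E) :
    f (∑ i ∈ s, w i • v i)
      ≤ f x + ∑ i ∈ s, w i * (⟪g x, v i - x⟫ + K / 2 * ‖v i - x‖ ^ 2) := by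
  have hsub : ∑ i ∈ s, w i • v i - x = ∑ i ∈ s, w i • (v i - x) := by
    simp only [smul_sub, sum_sub_distrib, ← sum_smul, hw1, one_smul]
  have hnorm : ‖∑ i ∈ s, w i • (v i - x)‖ ^ 2 ≤ ∑ i ∈ s, w i * ‖v i - x‖ ^ 2 := by
    grw [norm_sum_smul_le s hw]
    exact sq_sum_mul_le_sum_mul_sq s hw hw1 _
  have hdescent := le_add_inner_add_sq_of_lipschitzWith_gradient hf hg x (∑ i ∈ s, w i • v i)
  rw [hsub, inner_sum] at hdescent
  simp only [real_inner_smul_right] at hdescent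
  simp only [mul_add, sum_add_distrib, mul_left_comm (w _), ← mul_sum]
  have := mul_le_mul_of_nonneg_left hnorm (by positivity : (0 : ℝ) ≤ K / 2)
  linarith

lemma hasGradientAt_sum_mul {ι : Type*} (s : Finset ι) (c : ι → ℝ) {F : ι → E → ℝ} {g : ι → E}
    {x : E} (hF : ∀ i ∈ s, HasGradientAt (F i) (g i) x) :
    HasGradientAt (fun y => ∑ i ∈ s, c i * F i y) (∑ i ∈ s, c i • g i) x := by
  rw [hasGradientAt_iff_hasFDerivAt, map_sum]
  simp_rw [map_smul]
  exact HasFDerivAt.fun_sum fun i hi => (hF i hi).hasFDerivAt.const_mul (c i)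

end Smooth

lemma fedprox_coefficient_le {L B : ℝ} (hL : 0 < L) (hB : 1 ≤ B) :
    (L * B / (6 * L * B ^ 2 - L) - 1) / (6 * L * B ^ 2)
      + L * B ^ 2 / (2 * (6 * L * B ^ 2 - L) ^ 2) ≤ -(1 / (24 * L * B ^ 2)) := by
  have hx : 0 < L * B ^ 2 := by positivity
  have hD : 5 * (L * B ^ 2) ≤ 6 * L * B ^ 2 - L := by
    nlinarith [mul_le_mul_of_nonneg_left (one_le_pow₀ hB : 1 ≤ B ^ 2) hL.le]
  have hD0 : 0 < 6 * L * B ^ 2 - L := by linarith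
  have hlin : L * B / (6 * L * B ^ 2 - L) ≤ 1 / 5 := by
    rw [div_le_iff₀ hD0]; nlinarith
  have hquad : L * B ^ 2 / (2 * (6 * L * B ^ 2 - L) ^ 2) ≤ 1 / (50 * (L * B ^ 2)) := by
    rw [div_le_div_iff₀ (by positivity) (by positivity)]
    nlinarith [mul_le_mul hD hD (by positivity) hD0.le]
  calc (L * B / (6 * L * B ^ 2 - L) - 1) / (6 * L * B ^ 2)
        + L * B ^ 2 / (2 * (6 * L * B ^ 2 - L) ^ 2)
      ≤ (1 / 5 - 1) / (6 * L * B ^ 2) + 1 / (50 * (L * B ^ 2)) := by gcongr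
    _ ≤ -(1 / (24 * L * B ^ 2)) := by
      rw [← sub_nonneg]; field_simp; norm_num

theorem fedprox_convex_exact_descent_general
    {E : Type*} [NormedAddCommGroup E] [InnerProductSpace ℝ E] [CompleteSpace E]
    {N : ℕ} (p : Fin N → ℝ)
    (hp : ∀ k, 0 ≤ p k) (hp1 : ∑ k, p k = 1)
    (F : Fin N → E → ℝ) (f : E → ℝ) (hf : ∀ w, f w = ∑ k, p k * F k w)
    {L : ℝ} (hL : 0 < L)
    (hFdiff : ∀ k, Differentiable ℝ (F k))
    (hFlip : ∀ k, LipschitzWith (Real.toNNReal L) (gradient (F k)))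
    (wt : E) {B : ℝ} (hB : 1 ≤ B)
    (hdissim : ∑ k, p k * ‖gradient (F k) wt‖ ^ 2 ≤ B ^ 2 * ‖gradient f wt‖ ^ 2)
    {K : ℕ} (hK : 16 * B ^ 2 ≤ (K : ℝ))
    (wplus : Fin N → E)
    (hexact : ∀ k,
      gradient (F k) (wplus k) + (6 * L * B ^ 2) • (wplus k - wt) = 0) :
    ∑ s : Fin K → Fin N, (∏ j, p (s j)) * f ((1 / (K : ℝ)) • ∑ j, wplus (s j))
      ≤ f wt - (1 / (24 * L * B ^ 2)) * ‖gradient f wt‖ ^ 2 := by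
  have hgrad : ∀ x, HasGradientAt f (∑ k, p k • gradient (F k) x) x := fun x =>
    funext hf ▸ hasGradientAt_sum_mul _ p fun k _ => (hFdiff k x).hasGradientAt
  rw [(hgrad wt).gradient] at hdissim ⊢
  have hB2 : 1 ≤ B ^ 2 := one_le_pow₀ hB
  have hμ : (Real.toNNReal L : ℝ) < 6 * L * B ^ 2 := by
    rw [Real.coe_toNNReal L hL.le]; nlinarith
  have : NeZero K := ⟨by rintro rfl; norm_num at hK; nlinarith⟩
  have hprogress := sum_mul_inner_add_sq_le_of_add_smul_sub_eq_zero univ (fun k _ => hp k) hp1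
    (fun k _ => hFlip k) hμ (fun k _ => hexact k) (by linarith) hdissim
  refine (sum_prod_mul_le_add_sum_mul hp hp1 (f wt) (fun k =>
    ⟪∑ j, p j • gradient (F j) wt, wplus k - wt⟫ + Real.toNNReal L / 2 * ‖wplus k - wt‖ ^ 2)
    fun s => ?_).trans ?_
  · have := le_add_sum_mul_of_lipschitzWith_gradient hgrad
      (lipschitzWith_sum_smul_of_sum_eq_one univ (fun k _ => hp k) hp1 fun k _ => hFlip k)
      univ (w := fun _ => (K : ℝ)⁻¹) (by simp) (by simp) (fun j => wplus (s j)) wt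
    simpa [← smul_sum, ← mul_sum] using this
  · rw [Real.coe_toNNReal L hL.le] at hprogress ⊢
    have := mul_le_mul_of_nonneg_right (fedprox_coefficient_le hL hB)
      (sq_nonneg ‖∑ k, p k • gradient (F k) wt‖)
    linarith

/-- Convergence of FedProx in the convex case with exact local solves. -/
theorem fedprox_convex_exact_descent
    {E : Type*} [NormedAddCommGroup E] [InnerProductSpace ℝ E] [CompleteSpace E]
    {N : ℕ} (hN : 1 ≤ N) (p : Fin N → ℝ)
    (hp : ∀ k, 0 ≤ p k) (hp1 : ∑ k, p k = 1)
    (F : Fin N → E → ℝ) (f : E → ℝ) (hf : ∀ w, f w = ∑ k, p k * F k w)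
    {L : ℝ} (hL : 0 < L)
    (hFconv : ∀ k, ConvexOn ℝ Set.univ (F k))
    (hFdiff : ∀ k, Differentiable ℝ (F k))
    (hFlip : ∀ k, LipschitzWith (Real.toNNReal L) (gradient (F k)))
    (wt : E) {B : ℝ} (hB : 1 ≤ B)
    (hdissim : ∑ k, p k * ‖gradient (F k) wt‖ ^ 2 ≤ B ^ 2 * ‖gradient f wt‖ ^ 2)
    {K : ℕ} (hK : 16 * B ^ 2 ≤ (K : ℝ))
    (wplus : Fin N → E)
    (hexact : ∀ k,
      gradient (F k) (wplus k) + (6 * L * B ^ 2) • (wplus k - wt) = 0) :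
    ∑ s : Fin K → Fin N, (∏ j, p (s j)) * f ((1 / (K : ℝ)) • ∑ j, wplus (s j))
      ≤ f wt - (1 / (24 * L * B ^ 2)) * ‖gradient f wt‖ ^ 2 :=
  fedprox_convex_exact_descent_general p hp hp1 F f hf hL hFdiff hFlip wt hB hdissim hK wplus hexact
end

section
/- Distance bound for the averaged FedProx iterate. Let w : Fin N → E (the local updates w k⁺), wᵗ ∈ E, and c ≥ 0 be such that ‖w k − wᵗ‖ ≤ c·‖∇F k (wᵗ)‖ for every k. If the local functions are B-dissimilar at wᵗ, i.e. ∑ k, p k·‖∇F k (wᵗ)‖² ≤ B²·‖∇f(wᵗ)‖² with B ≥ 0, then the weighted average w̄ = ∑ k, p k · w k satisfies ‖w̄ − wᵗ‖ ≤ c·B·‖∇f(wᵗ)‖. (In FedProx, c = (1+γ)/μ̄ where γ is the inexactness level and μ̄ = μ − L₋.) -/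
open scoped BigOperators

/-- Distance bound for the averaged FedProx iterate. -/
theorem averaged_iterate_distance_bound
    {E : Type*} [NormedAddCommGroup E] [InnerProductSpace ℝ E] [CompleteSpace E]
    {N : ℕ} (hN : 1 ≤ N) (p : Fin N → ℝ)
    (hp : ∀ k, 0 ≤ p k) (hp1 : ∑ k, p k = 1)
    (F : Fin N → E → ℝ) (f : E → ℝ) (hf : ∀ w, f w = ∑ k, p k * F k w)
    (hFdiff : ∀ k, Differentiable ℝ (F k))
    (w : Fin N → E) (wt : E) {c : ℝ} (hc : 0 ≤ c)
    (hdist : ∀ k, ‖w k - wt‖ ≤ c * ‖gradient (F k) wt‖)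
    {B : ℝ} (hB : 0 ≤ B)
    (hdissim : ∑ k, p k * ‖gradient (F k) wt‖ ^ 2 ≤ B ^ 2 * ‖gradient f wt‖ ^ 2) :
    ‖(∑ k, p k • w k) - wt‖ ≤ c * B * ‖gradient f wt‖ := by
  set g : Fin N → ℝ := fun k => ‖gradient (F k) wt‖ with hg
  have hgnn : ∀ k, 0 ≤ g k := fun k => norm_nonneg _
  have hS : ∑ k, p k * g k ≤ B * ‖gradient f wt‖ := by
    have hcs : (∑ k, Real.sqrt (p k) * (Real.sqrt (p k) * g k)) ^ 2 ≤
        (∑ k, Real.sqrt (p k) ^ 2) * (∑ k, (Real.sqrt (p k) * g k) ^ 2) :=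
      Finset.sum_mul_sq_le_sq_mul_sq _ _ _
    have h1 : ∀ k, Real.sqrt (p k) * (Real.sqrt (p k) * g k) = p k * g k := by
      intro k
      rw [← mul_assoc, Real.mul_self_sqrt (hp k)]
    have h2 : ∀ k, (Real.sqrt (p k) * g k) ^ 2 = p k * g k ^ 2 := by
      intro k
      rw [mul_pow, Real.sq_sqrt (hp k)]
    simp only [h1, h2, Real.sq_sqrt, hp] at hcs
    rw [hp1, one_mul] at hcs
    have hcs2 : (∑ k, p k * g k) ^ 2 ≤ (B * ‖gradient f wt‖) ^ 2 := by
      calc (∑ k, p k * g k) ^ 2 ≤ ∑ k, p k * g k ^ 2 := hcs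
        _ ≤ B ^ 2 * ‖gradient f wt‖ ^ 2 := hdissim
        _ = (B * ‖gradient f wt‖) ^ 2 := by ring
    exact (abs_le_of_sq_le_sq' hcs2 (by positivity)).2
  calc ‖(∑ k, p k • w k) - wt‖ = ‖∑ k, p k • (w k - wt)‖ := by
        congr 1
        simp [smul_sub, Finset.sum_sub_distrib, ← Finset.sum_smul, hp1]
    _ ≤ ∑ k, ‖p k • (w k - wt)‖ := norm_sum_le _ _
    _ = ∑ k, p k * ‖w k - wt‖ := by
        simp [norm_smul, abs_of_nonneg (hp _)]
    _ ≤ ∑ k, p k * (c * g k) := by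
        apply Finset.sum_le_sum
        intro k _
        exact mul_le_mul_of_nonneg_left (hdist k) (hp k)
    _ = c * ∑ k, p k * g k := by
        rw [Finset.mul_sum]; congr 1; ext k; ring
    _ ≤ c * (B * ‖gradient f wt‖) := mul_le_mul_of_nonneg_left hS hc
    _ = c * B * ‖gradient f wt‖ := by ring
end

section
/- Dispersion bound for the sampled FedProx average. Let v : Fin N → E (the local updates w k⁺), wᵗ ∈ E, μ̄ > 0, 0 ≤ γ, and suppose ‖v k − wᵗ‖ ≤ ((1+γ)/μ̄)·‖∇F k (wᵗ)‖ for every k, and that the local functions are B-dissimilar at wᵗ (∑ k, p k·‖∇F k (wᵗ)‖² ≤ B²·‖∇f(wᵗ)‖², B ≥ 0). Let v̄ = ∑ k, p k · v k and K ≥ 1. Then ∑_{s : Fin K → Fin N} (∏ j, p (s j)) · ‖(1/K)·∑ j, v (s j) − v̄‖² ≤ (2·B²·(1+γ)²/(K·μ̄²))·‖∇f(wᵗ)‖². -/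
open scoped BigOperators RealInnerProductSpace

/-!
Writing `u k = v k - v̄`, the sampled average minus `v̄` is `(1/K) ∑ⱼ u (s j)`, a normalized sum
of `K` independent copies of a centred random vector. Cross terms vanish, so its second moment is
`(1/K) ∑ₖ pₖ ‖u k‖²`. The variance `∑ₖ pₖ ‖u k‖²` is at most the second moment `∑ₖ pₖ ‖v k - wᵗ‖²`
about any other point, and the latter is bounded by `((1+γ)/μ̄)² B² ‖∇f(wᵗ)‖²` through the
proximal step bound and `B`-dissimilarity.
-/

namespace FedProx

variable {ι E : Type*} [Fintype ι] [NormedAddCommGroup E] [InnerProductSpace ℝ E]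
  {p : ι → ℝ}

theorem sum_pi_prod_eq_one (hp1 : ∑ k, p k = 1) (K : ℕ) :
    ∑ s : Fin K → ι, ∏ j, p (s j) = 1 := by
  rw [← Fintype.sum_pow, hp1, one_pow]

theorem sum_mul_norm_add_sq_of_weighted_mean_eq_zero (hp1 : ∑ k, p k = 1) {x : ι → E}
    (hx : ∑ k, p k • x k = 0) (y : E) :
    ∑ k, p k * ‖x k + y‖ ^ 2 = ∑ k, p k * ‖x k‖ ^ 2 + ‖y‖ ^ 2 := by
  have cross : ∑ k, p k * ⟪x k, y⟫ = 0 := by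
    simp only [← real_inner_smul_left, ← sum_inner, hx, inner_zero_left]
  calc ∑ k, p k * ‖x k + y‖ ^ 2
      = ∑ k, p k * ‖x k‖ ^ 2 + 2 * ∑ k, p k * ⟪x k, y⟫ + (∑ k, p k) * ‖y‖ ^ 2 := by
        simp only [norm_add_sq_real, Finset.mul_sum, Finset.sum_mul, ← Finset.sum_add_distrib]
        exact Finset.sum_congr rfl fun k _ => by ring
    _ = ∑ k, p k * ‖x k‖ ^ 2 + ‖y‖ ^ 2 := by rw [cross, hp1]; ring

theorem sum_mul_norm_sub_weighted_mean_sq_le (hp1 : ∑ k, p k = 1) (x : ι → E) (c : E) :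
    ∑ k, p k * ‖x k - ∑ i, p i • x i‖ ^ 2 ≤ ∑ k, p k * ‖x k - c‖ ^ 2 := by
  set m := ∑ i, p i • x i
  have hcentred : ∑ k, p k • (x k - m) = 0 := by
    simp only [smul_sub, Finset.sum_sub_distrib, ← Finset.sum_smul, hp1, one_smul, m, sub_self]
  have h := sum_mul_norm_add_sq_of_weighted_mean_eq_zero hp1 hcentred (m - c)
  simp only [sub_add_sub_cancel] at h
  rw [h]
  exact le_add_of_nonneg_right (sq_nonneg _)

theorem sum_pi_prod_mul_norm_sum_sq (hp1 : ∑ k, p k = 1) {u : ι → E}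
    (hu : ∑ k, p k • u k = 0) (K : ℕ) :
    ∑ s : Fin K → ι, (∏ j, p (s j)) * ‖∑ j, u (s j)‖ ^ 2 = K * ∑ k, p k * ‖u k‖ ^ 2 := by
  induction K with
  | zero => simp
  | succ K ih =>
    rw [← (Fin.consEquiv fun _ => ι).sum_comp, Fintype.sum_prod_type, Finset.sum_comm]
    simp only [Fin.consEquiv_apply, Fin.prod_univ_succ, Fin.sum_univ_succ, Fin.cons_zero,
      Fin.cons_succ]
    calc ∑ t : Fin K → ι, ∑ k, p k * (∏ j, p (t j)) * ‖u k + ∑ j, u (t j)‖ ^ 2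
        = ∑ t : Fin K → ι, (∏ j, p (t j)) * ∑ k, p k * ‖u k + ∑ j, u (t j)‖ ^ 2 := by
          simp only [Finset.mul_sum]
          exact Finset.sum_congr rfl fun t _ => Finset.sum_congr rfl fun k _ => by ring
      _ = (∑ t : Fin K → ι, ∏ j, p (t j)) * ∑ k, p k * ‖u k‖ ^ 2
            + ∑ t : Fin K → ι, (∏ j, p (t j)) * ‖∑ j, u (t j)‖ ^ 2 := by
          simp only [sum_mul_norm_add_sq_of_weighted_mean_eq_zero hp1 hu, mul_add,
            Finset.sum_add_distrib, Finset.sum_mul]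
      _ = (K + 1 : ℕ) * ∑ k, p k * ‖u k‖ ^ 2 := by
          rw [sum_pi_prod_eq_one hp1, ih]
          push_cast
          ring

theorem sum_pi_prod_mul_norm_sampleAverage_sub_sq (hp1 : ∑ k, p k = 1) (v : ι → E) {K : ℕ}
    (hK : K ≠ 0) :
    ∑ s : Fin K → ι, (∏ j, p (s j)) * ‖(1 / (K : ℝ)) • ∑ j, v (s j) - ∑ k, p k • v k‖ ^ 2
      = (1 / (K : ℝ)) * ∑ k, p k * ‖v k - ∑ i, p i • v i‖ ^ 2 := by
  set vbar := ∑ i, p i • v i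
  have hcentred : ∑ k, p k • (v k - vbar) = 0 := by
    simp only [smul_sub, Finset.sum_sub_distrib, ← Finset.sum_smul, hp1, one_smul, vbar,
      sub_self]
  have hK' : (K : ℝ) ≠ 0 := Nat.cast_ne_zero.mpr hK
  have average_sub (s : Fin K → ι) :
      (1 / (K : ℝ)) • ∑ j, v (s j) - vbar = (1 / (K : ℝ)) • ∑ j, (v (s j) - vbar) := by
    rw [Finset.sum_sub_distrib, Finset.sum_const, Finset.card_univ, Fintype.card_fin, smul_sub,
      ← Nat.cast_smul_eq_nsmul ℝ, smul_smul, one_div_mul_cancel hK', one_smul]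
  simp only [average_sub, norm_smul, mul_pow, Real.norm_eq_abs, sq_abs]
  calc ∑ s : Fin K → ι, (∏ j, p (s j)) * ((1 / (K : ℝ)) ^ 2 * ‖∑ j, (v (s j) - vbar)‖ ^ 2)
      = (1 / (K : ℝ)) ^ 2 * (K * ∑ k, p k * ‖v k - vbar‖ ^ 2) := by
        rw [← sum_pi_prod_mul_norm_sum_sq hp1 hcentred K, Finset.mul_sum]
        exact Finset.sum_congr rfl fun s _ => by ring
    _ = (1 / (K : ℝ)) * ∑ k, p k * ‖v k - vbar‖ ^ 2 := by field_simp

end FedProx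

theorem fedprox_sampled_average_dispersion_general
    {E : Type*} [NormedAddCommGroup E] [InnerProductSpace ℝ E] [CompleteSpace E]
    {N : ℕ} (p : Fin N → ℝ)
    (hp : ∀ k, 0 ≤ p k) (hp1 : ∑ k, p k = 1)
    (F : Fin N → E → ℝ) (f : E → ℝ)
    (v : Fin N → E) (wt : E)
    {μbar : ℝ} {γ : ℝ}
    (hdist : ∀ k, ‖v k - wt‖ ≤ ((1 + γ) / μbar) * ‖gradient (F k) wt‖)
    {B : ℝ}
    (hdissim : ∑ k, p k * ‖gradient (F k) wt‖ ^ 2 ≤ B ^ 2 * ‖gradient f wt‖ ^ 2)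
    (vbar : E) (hvbar : vbar = ∑ k, p k • v k)
    {K : ℕ} (hK : 1 ≤ K) :
    ∑ s : Fin K → Fin N, (∏ j, p (s j)) * ‖(1 / (K : ℝ)) • (∑ j, v (s j)) - vbar‖ ^ 2
      ≤ (2 * B ^ 2 * (1 + γ) ^ 2 / (K * μbar ^ 2)) * ‖gradient f wt‖ ^ 2 := by
  subst hvbar
  rw [FedProx.sum_pi_prod_mul_norm_sampleAverage_sub_sq hp1 v (by omega)]
  have hbound_nonneg :
      0 ≤ (1 / (K : ℝ)) * (((1 + γ) / μbar) ^ 2 * (B ^ 2 * ‖gradient f wt‖ ^ 2)) := by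
    positivity
  calc (1 / (K : ℝ)) * ∑ k, p k * ‖v k - ∑ i, p i • v i‖ ^ 2
      ≤ (1 / (K : ℝ)) * ∑ k, p k * ‖v k - wt‖ ^ 2 := by
        gcongr (1 / (K : ℝ)) * ?_
        exact FedProx.sum_mul_norm_sub_weighted_mean_sq_le hp1 v wt
    _ ≤ (1 / (K : ℝ)) * ∑ k, p k * (((1 + γ) / μbar) * ‖gradient (F k) wt‖) ^ 2 := by
        gcongr with k
        · exact hp k
        · exact hdist k
    _ = (1 / (K : ℝ)) * (((1 + γ) / μbar) ^ 2 * ∑ k, p k * ‖gradient (F k) wt‖ ^ 2) := by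
        congr 1
        rw [Finset.mul_sum]
        exact Finset.sum_congr rfl fun k _ => by ring
    _ ≤ (1 / (K : ℝ)) * (((1 + γ) / μbar) ^ 2 * (B ^ 2 * ‖gradient f wt‖ ^ 2)) := by gcongr
    _ ≤ (2 * B ^ 2 * (1 + γ) ^ 2 / (K * μbar ^ 2)) * ‖gradient f wt‖ ^ 2 := by
        have h2 : (2 * B ^ 2 * (1 + γ) ^ 2 / (K * μbar ^ 2)) * ‖gradient f wt‖ ^ 2
            = 2 * ((1 / (K : ℝ)) * (((1 + γ) / μbar) ^ 2 * (B ^ 2 * ‖gradient f wt‖ ^ 2))) := by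
          ring
        linarith

/-- Dispersion bound for the sampled FedProx average. -/
theorem fedprox_sampled_average_dispersion
    {E : Type*} [NormedAddCommGroup E] [InnerProductSpace ℝ E] [CompleteSpace E]
    {N : ℕ} (hN : 1 ≤ N) (p : Fin N → ℝ)
    (hp : ∀ k, 0 ≤ p k) (hp1 : ∑ k, p k = 1)
    (F : Fin N → E → ℝ) (f : E → ℝ) (hf : ∀ w, f w = ∑ k, p k * F k w)
    (hFdiff : ∀ k, Differentiable ℝ (F k))
    (v : Fin N → E) (wt : E)
    {μbar : ℝ} (hμbar : 0 < μbar) {γ : ℝ} (hγ : 0 ≤ γ)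
    (hdist : ∀ k, ‖v k - wt‖ ≤ ((1 + γ) / μbar) * ‖gradient (F k) wt‖)
    {B : ℝ} (hB : 0 ≤ B)
    (hdissim : ∑ k, p k * ‖gradient (F k) wt‖ ^ 2 ≤ B ^ 2 * ‖gradient f wt‖ ^ 2)
    (vbar : E) (hvbar : vbar = ∑ k, p k • v k)
    {K : ℕ} (hK : 1 ≤ K) :
    ∑ s : Fin K → Fin N, (∏ j, p (s j)) * ‖(1 / (K : ℝ)) • (∑ j, v (s j)) - vbar‖ ^ 2
      ≤ (2 * B ^ 2 * (1 + γ) ^ 2 / (K * μbar ^ 2)) * ‖gradient f wt‖ ^ 2 :=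
  fedprox_sampled_average_dispersion_general p hp hp1 F f v wt hdist hdissim vbar hvbar hK
end
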